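/- For every t ≥ 1 and every coordinate i, in the LIF network with a feedback connection, s(t)_i = H(Û(t)_i − V_th(λ â(t−1)_i + 1)) and â(t)_i = λ â(t−1)_i + H(Û(t)_i − V_th(λ â(t−1)_i + 1)); i.e., the SAF forward recurrence with feedback connection reproduces the spikes and spike accumulations of the LIF network with feedback connection. -/
import Mathlib


open Finset Matrix

/-- The Heaviside step function: `H z = 1` if `z ≥ 0`, else `0`. -/
noncomputable def Heaviside (z : ℝ) : ℝ := if 0 ≤ z then 1 else 0

private lemma acc_succ {V : Type*} [AddCommMonoid V] [Module ℝ V]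
    (lam : ℝ) (y : ℕ → V) (t : ℕ) :
    (∑ τ ∈ Finset.range (t + 1 + 1), lam ^ (t + 1 - τ) • y τ)
      = lam • (∑ τ ∈ Finset.range (t + 1), lam ^ (t - τ) • y τ) + y (t + 1) := by
  rw [Finset.sum_range_succ, Finset.smul_sum]
  congr 1
  · apply Finset.sum_congr rfl
    intro τ hτ
    rw [Finset.mem_range] at hτ
    rw [smul_smul]
    have h : t + 1 - τ = (t - τ) + 1 := by omega
    rw [h, pow_succ']
  · simp

/-- with a feedback connection, for every `t ≥ 1` and coordinate `i`,
`s(t)_i = H(Û(t)_i − V_th(λ â(t−1)_i + 1))` and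
`â(t)_i = λ â(t−1)_i + H(Û(t)_i − V_th(λ â(t−1)_i + 1))`. -/
theorem saf_feedback_recurrence
    (lam Vth : ℝ) (m n p : ℕ)
    (W : Matrix (Fin n) (Fin m) ℝ) (Wb : Matrix (Fin n) (Fin p) ℝ)
    (b : Fin n → ℝ)
    (x : ℕ → Fin m → ℝ) (hx0 : x 0 = 0)
    (xb : ℕ → Fin p → ℝ) (hxc0 : xb 0 = 0)
    (u s : ℕ → Fin n → ℝ)
    (hs0 : s 0 = 0)
    (hu : ∀ t, 1 ≤ t →
      u t = lam • (u (t - 1) - Vth • s (t - 1)) + W.mulVec (x t) + b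
        + Wb.mulVec (xb (t - 1)))
    (hs : ∀ t, 1 ≤ t → ∀ i, s t i = Heaviside (u t i - Vth))
    (ax : ℕ → Fin m → ℝ)
    (hax : ∀ t, ax t = ∑ τ ∈ Finset.range (t + 1), lam ^ (t - τ) • x τ)
    (ab : ℕ → Fin p → ℝ)
    (hac : ∀ t, ab t = ∑ τ ∈ Finset.range (t + 1), lam ^ (t - τ) • xb τ)
    (ahat : ℕ → Fin n → ℝ)
    (ha : ∀ t, ahat t = ∑ τ ∈ Finset.range (t + 1), lam ^ (t - τ) • s τ)
    (U : ℕ → Fin n → ℝ)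
    (hU0 : U 0 = u 0)
    (hU : ∀ t, 1 ≤ t →
      U t = W.mulVec (ax t) + (∑ τ ∈ Finset.range t, lam ^ τ) • b
        + lam ^ t • u 0 + Wb.mulVec (ab (t - 1))) :
    ∀ t, 1 ≤ t → ∀ i,
      s t i = Heaviside (U t i - Vth * (lam * ahat (t - 1) i + 1)) ∧
      ahat t i = lam * ahat (t - 1) i
        + Heaviside (U t i - Vth * (lam * ahat (t - 1) i + 1)) := by
  -- recurrences for the accumulators
  have hax' : ∀ t, ax (t + 1) = lam • ax t + x (t + 1) := by
    intro t; rw [hax, hax]; exact acc_succ lam x t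
  have hac' : ∀ t, ab (t + 1) = lam • ab t + xb (t + 1) := by
    intro t; rw [hac, hac]; exact acc_succ lam xb t
  have ha' : ∀ t, ahat (t + 1) = lam • ahat t + s (t + 1) := by
    intro t; rw [ha, ha]; exact acc_succ lam s t
  have hax0 : ax 0 = 0 := by rw [hax]; simp [hx0]
  have hac0 : ab 0 = 0 := by rw [hac]; simp [hxc0]
  have ha0 : ahat 0 = 0 := by rw [ha]; simp [hs0]
  -- key invariant
  have key : ∀ t, 1 ≤ t → u t = fun i => U t i - Vth * (lam * ahat (t - 1) i) := by
    intro t ht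
    induction t, ht using Nat.le_induction with
    | base =>
        have h1 : u 1 = lam • (u 0 - Vth • s 0) + W.mulVec (x 1) + b
            + Wb.mulVec (xb 0) := hu 1 (le_refl 1)
        have hU1 := hU 1 (le_refl 1)
        have hax1 : ax 1 = x 1 := by
          have := hax' 0; rw [hax0] at this; simpa using this
        funext i
        rw [h1, hU1]
        simp only [hs0, hxc0, hac0, ha0, hax1, Matrix.mulVec_zero, smul_zero, sub_zero,
          Pi.add_apply, Pi.smul_apply, Pi.sub_apply, smul_eq_mul, mul_zero,
          Finset.range_one, Finset.sum_singleton, pow_zero, pow_one, one_smul, add_zero, Pi.zero_apply]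
        ring
    | succ t ht ih =>
        have hrec : u (t + 1) = lam • (u t - Vth • s t) + W.mulVec (x (t + 1)) + b
            + Wb.mulVec (xb t) := by
          have := hu (t + 1) (by omega)
          simpa using this
        have hUt := hU t ht
        have hUt1 := hU (t + 1) (by omega)
        simp only [Nat.add_sub_cancel] at hUt1
        have habt : ab t = lam • ab (t - 1) + xb t := by
          have := hac' (t - 1)
          have h : t - 1 + 1 = t := by omega
          rwa [h] at this
        have haht : ahat t = lam • ahat (t - 1) + s t := by
          have := ha' (t - 1)
          have h : t - 1 + 1 = t := by omega
          rwa [h] at this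
        funext i
        simp only [Nat.add_sub_cancel]
        rw [hrec, ih, hUt1, hax' t, habt, haht, hUt, geom_sum_succ]
        simp only [Matrix.mulVec_add, Matrix.mulVec_smul, Pi.add_apply, Pi.smul_apply,
          Pi.sub_apply, smul_eq_mul, pow_succ]
        ring
  intro t ht i
  have hk : u t i = U t i - Vth * (lam * ahat (t - 1) i) := by rw [key t ht]
  have hsti : s t i = Heaviside (U t i - Vth * (lam * ahat (t - 1) i + 1)) := by
    rw [hs t ht i, hk]; congr 1; ring
  refine ⟨hsti, ?_⟩
  have haht : ahat t = lam • ahat (t - 1) + s t := by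
    have := ha' (t - 1)
    have h : t - 1 + 1 = t := by omega
    rwa [h] at this
  rw [haht]
  simp only [Pi.add_apply, Pi.smul_apply, smul_eq_mul]
  rw [hsti]
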